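/- For n ≥ 2, the natural restriction map from Schwartz functions on ℝ^n to the dual of distributions supported at the origin fits into an exact sequence: the space of Schwartz functions on ℝ^n vanishing to infinite order at 0 (equivalently, Schwartz functions of ℝ^n \ {0} extended by zero) is precisely the kernel of the map S(ℝ^n) → ∏_{I ∈ ℕ^n} ℂ, φ ↦ ((∂^I φ)(0))_I. -/

import Mathlib

open SchwartzMap

/-- The iterated partial-derivative operator `∂^I` on Schwartz functions on `ℝ^n`. -/
noncomputable def partialMulti (n : ℕ) (I : Fin n → ℕ) :
    𝓢((Fin n → ℝ), ℂ) →L[ℂ] 𝓢((Fin n → ℝ), ℂ) :=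
  (List.ofFn fun i : Fin n => (LineDeriv.lineDerivOpCLM ℂ 𝓢((Fin n → ℝ), ℂ) (Pi.single i 1 : Fin n → ℝ)) ^ (I i)).prod

/-- The linear map `S(ℝ^n) → ∏_{I ∈ ℕ^n} ℂ`, `φ ↦ ((∂^I φ)(0))_I`. -/
noncomputable def derivsAtZero (n : ℕ) : 𝓢((Fin n → ℝ), ℂ) →ₗ[ℂ] ((Fin n → ℕ) → ℂ) where
  toFun φ := fun I => (partialMulti n I φ) 0
  map_add' φ ψ := by funext I; simp
  map_smul' c φ := by funext I; simp

/-!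
Partial derivatives of a smooth function commute, so the value of the `k`-th derivative at `x` on
a tuple of coordinate vectors depends only on how often each coordinate occurs: it is
`∂^I φ(x)` for the multi-index `I` of these multiplicities. By multilinearity, these values
determine the `k`-th derivative at `x`.
-/

open LineDeriv

namespace SchwartzMap

section Commute

variable {E F : Type*} [NormedAddCommGroup E] [NormedSpace ℝ E]
  [NormedAddCommGroup F] [NormedSpace ℝ F]

theorem lineDerivOp_comm (m m' : E) (f : 𝓢(E, F)) : ∂_{m} (∂_{m'} f) = ∂_{m'} (∂_{m} f) := by
  ext x
  have second_deriv (v w : E) : ∂_{v} (∂_{w} f) x = fderiv ℝ (fderiv ℝ f) x v w :=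
    calc ∂_{v} (∂_{w} f) x = ∂^{![v, w]} f x := rfl
      _ = iteratedFDeriv ℝ 2 f x ![v, w] := iteratedLineDerivOp_eq_iteratedFDeriv
      _ = fderiv ℝ (fderiv ℝ f) x v w := iteratedFDeriv_two_apply _ _ _
  rw [second_deriv, second_deriv, (f.smooth 2).contDiffAt.isSymmSndFDerivAt (by simp) m m']

variable (𝕜 : Type*) [RCLike 𝕜] [NormedSpace 𝕜 F] [SMulCommClass ℝ 𝕜 F]

theorem commute_lineDerivOpCLM (m m' : E) :
    Commute (lineDerivOpCLM 𝕜 𝓢(E, F) m) (lineDerivOpCLM 𝕜 𝓢(E, F) m') := by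
  ext1 f
  exact lineDerivOp_comm m m' f

theorem prod_ofFn_lineDerivOpCLM_apply {k : ℕ} (m : Fin k → E) (f : 𝓢(E, F)) :
    (List.ofFn fun j => lineDerivOpCLM 𝕜 𝓢(E, F) (m j)).prod f = ∂^{m} f := by
  induction k with
  | zero => rfl
  | succ k ih =>
    rw [List.ofFn_succ, List.prod_cons, mul_apply_eq_comp, ih, iteratedLineDerivOp_succ_left]
    rfl

theorem prod_map_lineDerivOpCLM_perm {ι : Type*} (d : ι → E) {l l' : List ι} (h : l.Perm l') :
    (l.map fun i => lineDerivOpCLM 𝕜 𝓢(E, F) (d i)).prod =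
      (l'.map fun i => lineDerivOpCLM 𝕜 𝓢(E, F) (d i)).prod :=
  (h.map _).prod_eq' <| List.pairwise_map.2 <|
    List.pairwise_of_forall fun _ _ => commute_lineDerivOpCLM 𝕜 _ _

end Commute

end SchwartzMap

section MultiIndex

variable {n : ℕ}

def multiIndexList (I : Fin n → ℕ) : List (Fin n) :=
  (List.ofFn fun i => List.replicate (I i) i).flatten

theorem count_multiIndexList (I : Fin n → ℕ) (i : Fin n) : (multiIndexList I).count i = I i := by
  simp [multiIndexList, List.count_flatten, List.map_ofFn, Function.comp_def, List.count_replicate,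
    List.sum_ofFn, Finset.sum_ite_eq']

theorem perm_multiIndexList_count (l : List (Fin n)) :
    l.Perm (multiIndexList fun i => l.count i) :=
  List.perm_iff_count.2 fun i => (count_multiIndexList (fun i => l.count i) i).symm

theorem partialMulti_eq_prod (I : Fin n → ℕ) :
    partialMulti n I = ((multiIndexList I).map fun i =>
      lineDerivOpCLM ℂ 𝓢((Fin n → ℝ), ℂ) (Pi.single i 1 : Fin n → ℝ)).prod := by
  simp [partialMulti, multiIndexList, List.map_flatten, List.map_ofFn, Function.comp_def,
    List.prod_flatten, List.map_replicate, List.prod_replicate]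

theorem iteratedFDeriv_apply_single_eq_partialMulti {k : ℕ} (v : Fin k → Fin n)
    (φ : 𝓢((Fin n → ℝ), ℂ)) (x : Fin n → ℝ) :
    iteratedFDeriv ℝ k φ x (fun j => Pi.single (v j) 1) =
      partialMulti n (fun i => (List.ofFn v).count i) φ x := by
  rw [← SchwartzMap.iteratedLineDerivOp_eq_iteratedFDeriv,
    ← SchwartzMap.prod_ofFn_lineDerivOpCLM_apply ℂ, partialMulti_eq_prod,
    ← SchwartzMap.prod_map_lineDerivOpCLM_perm ℂ _ (perm_multiIndexList_count _), List.map_ofFn]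
  rfl

theorem forall_partialMulti_apply_eq_zero_iff (φ : 𝓢((Fin n → ℝ), ℂ)) (x : Fin n → ℝ) :
    (∀ I, partialMulti n I φ x = 0) ↔ ∀ k, iteratedFDeriv ℝ k φ x = 0 := by
  constructor
  · intro h k
    refine ContinuousMultilinearMap.toMultilinearMap_injective <|
      Module.Basis.ext_multilinear (fun _ => Pi.basisFun ℝ (Fin n)) fun v => ?_
    simpa [Pi.basisFun_apply] using
      (iteratedFDeriv_apply_single_eq_partialMulti v φ x).trans (h _)
  · intro h I
    have hI : I = fun i => (List.ofFn (multiIndexList I).get).count i := by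
      simp only [List.ofFn_get, count_multiIndexList]
    rw [hI, ← iteratedFDeriv_apply_single_eq_partialMulti, h, zero_apply]

end MultiIndex

theorem stmt15_general (n : ℕ) :
    LinearMap.ker (derivsAtZero n)
      = {φ : 𝓢((Fin n → ℝ), ℂ) | ∀ k : ℕ, iteratedFDeriv ℝ k (⇑φ) (0 : Fin n → ℝ) = 0} := by
  ext φ
  rw [SetLike.mem_coe, LinearMap.mem_ker, Set.mem_ofPred_eq,
    ← forall_partialMulti_apply_eq_zero_iff, funext_iff]
  rfl

/-- A Schwartz function `φ` on `ℝ^n` (`n ≥ 2`) vanishes to infinite order at `0`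
(equivalently, restricts to a Schwartz function on `ℝ^n \ {0}`) iff it lies in the kernel
of `φ ↦ ((∂^I φ)(0))_I`, i.e. iff all iterated derivatives of `φ` vanish at `0`. -/
theorem stmt15 (n : ℕ) (hn : 2 ≤ n) :
    LinearMap.ker (derivsAtZero n)
      = {φ : 𝓢((Fin n → ℝ), ℂ) | ∀ k : ℕ, iteratedFDeriv ℝ k (⇑φ) (0 : Fin n → ℝ) = 0} :=
  stmt15_general n
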